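/- arXiv:2312.08076 — 8 statements merged into one kernel-verified Lean document; each statement's English description precedes it below -/
import Mathlib

section
/- Let s1, s2 : [0,∞) → ℝ be differentiable with derivatives v1 = s1', v2 = s2', where v1 and v2 are themselves differentiable and strictly positive at every time t ≥ 0. Assume: (a) s1(0) ≤ s2(0), and whenever τ ≥ 0 satisfies s1(τ) = s2(0), then v1(τ) ≤ v2(0); (b) the strict crossing condition: for all 0 ≤ t_a ≤ t_b, if s1(t_b) = s2(t_a) and v1(t_b) = v2(t_a), then v1'(t_b) < v2'(t_a). Then s1(t) ≤ s2(t) for all t ≥ 0. -/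
/-!
Suppose `s2 T < s1 T` and let `u x := s1⁻¹ (s2 x)` on `[0, T]`, the time at which the first
trajectory reaches the position the second one has at time `x`; then `s1 x ≤ s2 x` exactly when
`x ≤ u x`. As long as the positions stay ordered, the velocities compared at equal positions stay
ordered, `v1 (u x) ≤ v2 x`: this is a barrier argument, since at a touching point `u' x = 1` and
so `d/dx v1 (u x) = a1 (u x) < a2 x` by the crossing condition. Hence at a first time `c` where
the positions meet (`u c = c`) we have `v1 c ≤ v2 c`, and if the velocities are equal too, then
`a1 c < a2 c`; either way `s2 - s1` becomes positive right after `c`, so the positions never cross.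
-/

open Set Filter Topology

theorem ContinuousOn.exists_continuous_rightInvOn_Icc {f : ℝ → ℝ} {a b : ℝ} (hab : a ≤ b)
    (hf : ContinuousOn f (Icc a b)) (hmono : StrictMonoOn f (Icc a b)) :
    ∃ g : ℝ → ℝ, Continuous g ∧ (∀ y, g y ∈ Icc a b) ∧ ∀ y ∈ Icc (f a) (f b), f (g y) = y := by
  have hfab : f a ≤ f b := hmono.monotoneOn (left_mem_Icc.2 hab) (right_mem_Icc.2 hab) hab
  let F : Icc a b → Icc (f a) (f b) := fun x =>
    ⟨f x, hmono.monotoneOn (left_mem_Icc.2 hab) x.2 x.2.1,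
      hmono.monotoneOn x.2 (right_mem_Icc.2 hab) x.2.2⟩
  have hF : StrictMono F := fun x y hxy => hmono x.2 y.2 hxy
  have hsurj : Function.Surjective F := by
    rintro ⟨y, hy⟩
    obtain ⟨x, hx, rfl⟩ := intermediate_value_Icc hab hf hy
    exact ⟨⟨x, hx⟩, rfl⟩
  let e := hF.orderIsoOfSurjective F hsurj
  refine ⟨fun y => e.symm (projIcc (f a) (f b) hfab y), ?_, fun y => (e.symm _).2, fun y hy => ?_⟩
  · exact continuous_subtype_val.comp (e.symm.continuous.comp continuous_projIcc)
  · simp only [projIcc_of_mem hfab hy]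
    exact congrArg Subtype.val (e.apply_symm_apply ⟨y, hy⟩)

theorem HasDerivWithinAt.of_comp_left {𝕜 : Type*} [NontriviallyNormedField 𝕜] {f g h : 𝕜 → 𝕜}
    {f' h' a : 𝕜} {s : Set 𝕜} (hg : ContinuousWithinAt g s a) (hf : HasDerivAt f f' (g a))
    (hh : HasDerivWithinAt h h' s a) (hf' : f' ≠ 0) (hcomp : EqOn (f ∘ g) h s) (ha : a ∈ s) :
    HasDerivWithinAt g (h' / f') s a := by
  convert! hf.hasFDerivAt.hasFDerivWithinAt.of_comp_of_leftInverse (t := univ)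
    (by simpa using hg.tendsto) hh (eventually_nhdsWithin_of_forall hcomp)
    (f'symm := .toSpanSingleton 𝕜 f'⁻¹) (fun _ ↦ by simp [hf']) ha |>.hasDerivWithinAt using 1
  simp [div_eq_mul_inv]

theorem strictMonoOn_Ici_of_hasDerivAt_pos {f f' : ℝ → ℝ} {a : ℝ}
    (hf : ∀ x, a ≤ x → HasDerivAt f (f' x) x) (hf' : ∀ x, a ≤ x → 0 < f' x) :
    StrictMonoOn f (Ici a) := by
  refine strictMonoOn_of_hasDerivWithinAt_pos (f' := f') (convex_Ici a) (HasDerivAt.continuousOn hf)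
    (fun x hx => ?_) (fun x hx => ?_)
  all_goals rw [interior_Ici] at hx
  · exact (hf x hx.le).hasDerivWithinAt
  · exact hf' x hx.le

theorem HasDerivWithinAt.eventually_lt_of_pos {f : ℝ → ℝ} {f' x : ℝ}
    (hf : HasDerivWithinAt f f' (Ioi x) x) (hf' : 0 < f') : ∀ᶠ y in 𝓝[>] x, f x < f y := by
  have hslope := (hasDerivWithinAt_iff_tendsto_slope' (lt_irrefl x)).1 hf
  filter_upwards [hslope.eventually (lt_mem_nhds hf'), self_mem_nhdsWithin] with y hpos hy
  exact (slope_pos_iff_of_le (le_of_lt hy)).1 hpos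

theorem eventually_lt_nhdsGT_of_deriv_nonneg_of_second_deriv_pos {p q : ℝ → ℝ} {c q' : ℝ}
    (hp : ∀ x, c ≤ x → HasDerivAt p (q x) x) (hq : HasDerivAt q q' c) (hqc : 0 ≤ q c)
    (hq' : q c = 0 → 0 < q') : ∀ᶠ x in 𝓝[>] c, p c < p x := by
  have hq_pos : ∀ᶠ x in 𝓝[>] c, 0 < q x := by
    rcases hqc.lt_or_eq with hpos | hzero
    · exact nhdsWithin_le_nhds (hq.continuousAt.eventually (lt_mem_nhds hpos))
    · simpa only [← hzero] using hq.hasDerivWithinAt.eventually_lt_of_pos (hq' hzero.symm)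
  obtain ⟨d, hcd, hsub⟩ := mem_nhdsGT_iff_exists_Ioo_subset.1 hq_pos
  have hmono : StrictMonoOn p (Icc c d) := by
    refine strictMonoOn_of_hasDerivWithinAt_pos (f' := q) (convex_Icc c d)
      (fun x hx => (hp x hx.1).continuousAt.continuousWithinAt) (fun x hx => ?_) (fun x hx => ?_)
    all_goals rw [interior_Icc] at hx
    · exact (hp x hx.1.le).hasDerivWithinAt
    · exact hsub hx
  filter_upwards [Ioo_mem_nhdsGT hcd] with x hx
  exact hmono (left_mem_Icc.2 hcd.le) (Ioo_subset_Icc_self hx) hx.1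

theorem ContinuousOn.nonneg_of_eventually_nonneg_at_first_zero {p : ℝ → ℝ} {a b : ℝ}
    (hp : ContinuousOn p (Icc a b)) (ha : 0 ≤ p a)
    (hstep : ∀ c ∈ Ico a b, (∀ x ∈ Icc a c, 0 ≤ p x) → p c = 0 → ∀ᶠ x in 𝓝[>] c, 0 ≤ p x) :
    ∀ x ∈ Icc a b, 0 ≤ p x := by
  by_contra! hneg
  set N := {x ∈ Icc a b | p x < 0}
  have hN : N.Nonempty := hneg
  have hNbdd : BddBelow N := ⟨a, fun x hx => hx.1.1⟩
  set c := sInf N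
  have hbefore : ∀ x ∈ Icc a b, x < c → 0 ≤ p x := fun x hx hxc =>
    not_lt.1 fun hpx => notMem_of_lt_csInf hxc hNbdd ⟨hx, hpx⟩
  have hclosed : ∀ {K : Set ℝ}, IsClosed K → IsClosed (Icc a b ∩ p ⁻¹' K) := fun hK =>
    hp.preimage_isClosed_of_isClosed isClosed_Icc hK
  obtain ⟨hc, hpc_le⟩ : c ∈ Icc a b ∩ p ⁻¹' Iic 0 :=
    (hclosed isClosed_Iic).closure_subset_iff.2 (fun x hx => ⟨hx.1, hx.2.le⟩)
      (csInf_mem_closure hN hNbdd)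
  have hpc_ge : 0 ≤ p c := by
    rcases hc.1.eq_or_lt with hac | hac
    · rwa [← hac]
    · have hsub : Ico a c ⊆ Icc a b ∩ p ⁻¹' Ici 0 := fun x hx =>
        ⟨⟨hx.1, hx.2.le.trans hc.2⟩, hbefore x ⟨hx.1, hx.2.le.trans hc.2⟩ hx.2⟩
      have hcl := (hclosed isClosed_Ici).closure_subset_iff.2 hsub
      exact (hcl (by rw [closure_Ico hac.ne]; exact right_mem_Icc.2 hac.le)).2
  have hpc : p c = 0 := le_antisymm hpc_le hpc_ge
  have hafter : ∀ x ∈ N, c < x := fun x hx =>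
    (csInf_le hNbdd hx).lt_of_ne fun h => (hpc ▸ h ▸ hx.2).false
  obtain ⟨y, hyN⟩ := hN
  have hright := hstep c ⟨hc.1, (hafter y hyN).trans_le hyN.1.2⟩
    (fun x hx => (hx.2.lt_or_eq).elim (hbefore x ⟨hx.1, hx.2.trans hc.2⟩) (fun h => h ▸ hpc_ge))
    hpc
  obtain ⟨d, hcd, hsub⟩ := mem_nhdsGT_iff_exists_Ioo_subset.1 hright
  obtain ⟨x, hxN, hxd⟩ := exists_lt_of_csInf_lt ⟨y, hyN⟩ hcd
  exact (hsub ⟨hafter x hxN, hxd⟩ : 0 ≤ p x).not_gt hxN.2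

theorem velocity_le_at_same_position {s1 s2 v1 v2 a1 a2 u : ℝ → ℝ} {T c : ℝ}
    (hs1 : ∀ t, 0 ≤ t → HasDerivAt s1 (v1 t) t)
    (hs2 : ∀ t, 0 ≤ t → HasDerivAt s2 (v2 t) t)
    (hv1 : ∀ t, 0 ≤ t → HasDerivAt v1 (a1 t) t)
    (hv2 : ∀ t, 0 ≤ t → HasDerivAt v2 (a2 t) t)
    (hv1pos : ∀ t, 0 ≤ t → 0 < v1 t)
    (hinit_v : ∀ τ, 0 ≤ τ → s1 τ = s2 0 → v1 τ ≤ v2 0)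
    (hcross : ∀ ta tb, 0 ≤ ta → ta ≤ tb →
      s1 tb = s2 ta → v1 tb = v2 ta → a1 tb < a2 ta)
    (hu_cont : ContinuousOn u (Icc 0 T)) (hu_nonneg : ∀ x ∈ Icc 0 T, 0 ≤ u x)
    (hu : ∀ x ∈ Icc 0 T, s1 (u x) = s2 x) (hc : c ∈ Ico 0 T)
    (hle : ∀ x ∈ Icc 0 c, s1 x ≤ s2 x) :
    v1 (u c) ≤ v2 c := by
  have hcT : Icc 0 c ⊆ Icc 0 T := Icc_subset_Icc_right hc.2.le
  have hmono1 := strictMonoOn_Ici_of_hasDerivAt_pos hs1 hv1pos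
  have hlag : ∀ x ∈ Icc 0 c, x ≤ u x := fun x hx =>
    (hmono1.le_iff_le hx.1 (hu_nonneg x (hcT hx))).1 ((hle x hx).trans_eq (hu x (hcT hx)).symm)
  have hu_deriv : ∀ x ∈ Ico 0 c, HasDerivWithinAt u (v2 x / v1 (u x)) (Ici x) x := by
    intro x hx
    have hxT : x ∈ Ico 0 T := ⟨hx.1, hx.2.trans hc.2⟩
    have hxT' : x ∈ Icc 0 T := Ico_subset_Icc_self hxT
    have hu_deriv_Icc := HasDerivWithinAt.of_comp_left (hu_cont x hxT') (hs1 _ (hu_nonneg x hxT'))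
      (hs2 x hx.1).hasDerivWithinAt (hv1pos _ (hu_nonneg x hxT')).ne' hu hxT'
    exact hu_deriv_Icc.mono_of_mem_nhdsWithin (Icc_mem_nhdsGE_of_mem hxT)
  have hv1u_cont : ContinuousOn (fun x => v1 (u x)) (Icc 0 c) := fun x hx =>
    ((hv1 _ (hu_nonneg x (hcT hx))).continuousAt.comp_continuousWithinAt
      (hu_cont x (hcT hx))).mono hcT
  have hv1u_deriv : ∀ x ∈ Ico 0 c,
      HasDerivWithinAt (fun x => v1 (u x)) (a1 (u x) * (v2 x / v1 (u x))) (Ici x) x :=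
    fun x hx => (hv1 _ (hu_nonneg x (hcT (Ico_subset_Icc_self hx)))).comp_hasDerivWithinAt x
      (hu_deriv x hx)
  have h0 : 0 ∈ Icc 0 T := hcT (left_mem_Icc.2 hc.1)
  refine image_le_of_deriv_right_lt_deriv_boundary' hv1u_cont hv1u_deriv
    (hinit_v _ (hu_nonneg 0 h0) (hu 0 h0)) (HasDerivAt.continuousOn fun x hx => hv2 x hx.1)
    (fun x hx => (hv2 x hx.1).hasDerivWithinAt) (fun x hx heq => ?_) (right_mem_Icc.2 hc.1)
  replace hx := Ico_subset_Icc_self hx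
  rw [heq, div_self (heq ▸ hv1pos _ (hu_nonneg x (hcT hx))).ne', mul_one]
  exact hcross x (u x) hx.1 (hlag x hx) (hu x (hcT hx)) heq

/-- **Monotonicity in the Position Domain** (paper's Theorem 1, precise version).
`s1, s2 : [0,∞) → ℝ` are differentiable positions with derivatives (velocities)
`v1 = s1'`, `v2 = s2'`, the velocities are differentiable with derivatives
(accelerations) `a1 = v1'`, `a2 = v2'` and strictly positive for all `t ≥ 0`.
Assumptions: (a) ordered initial data, and whenever `s1 τ = s2 0` for `τ ≥ 0`
then `v1 τ ≤ v2 0`; (b) the strict crossing condition.  Conclusion: the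
positions stay ordered for all time. -/
theorem position_monotonicity
    (s1 s2 v1 v2 a1 a2 : ℝ → ℝ)
    (hs1 : ∀ t, 0 ≤ t → HasDerivAt s1 (v1 t) t)
    (hs2 : ∀ t, 0 ≤ t → HasDerivAt s2 (v2 t) t)
    (hv1 : ∀ t, 0 ≤ t → HasDerivAt v1 (a1 t) t)
    (hv2 : ∀ t, 0 ≤ t → HasDerivAt v2 (a2 t) t)
    (hv1pos : ∀ t, 0 ≤ t → 0 < v1 t)
    (hv2pos : ∀ t, 0 ≤ t → 0 < v2 t)
    (hinit_s : s1 0 ≤ s2 0)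
    (hinit_v : ∀ τ, 0 ≤ τ → s1 τ = s2 0 → v1 τ ≤ v2 0)
    (hcross : ∀ ta tb, 0 ≤ ta → ta ≤ tb →
      s1 tb = s2 ta → v1 tb = v2 ta → a1 tb < a2 ta) :
    ∀ t, 0 ≤ t → s1 t ≤ s2 t := by
  intro T hT
  by_contra! hT_lt
  have hmono1 := strictMonoOn_Ici_of_hasDerivAt_pos hs1 hv1pos
  have hmono2 := (strictMonoOn_Ici_of_hasDerivAt_pos hs2 hv2pos).monotoneOn
  have hs1_cont : ContinuousOn s1 (Icc 0 T) := HasDerivAt.continuousOn fun x hx => hs1 x hx.1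
  have hs2_cont : ContinuousOn s2 (Icc 0 T) := HasDerivAt.continuousOn fun x hx => hs2 x hx.1
  obtain ⟨g, hg_cont, hg_mem, hg_inv⟩ :=
    hs1_cont.exists_continuous_rightInvOn_Icc hT (hmono1.mono Icc_subset_Ici_self)
  have hu : ∀ x ∈ Icc 0 T, s1 (g (s2 x)) = s2 x := fun x hx => hg_inv _
    ⟨hinit_s.trans (hmono2 self_mem_Ici hx.1 hx.1), (hmono2 hx.1 hT hx.2).trans hT_lt.le⟩
  have hgap := ContinuousOn.nonneg_of_eventually_nonneg_at_first_zero
    (p := fun t => s2 t - s1 t) (hs2_cont.sub hs1_cont) (sub_nonneg.2 hinit_s) ?_ T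
    (right_mem_Icc.2 hT)
  · exact (sub_nonneg.1 hgap).not_gt hT_lt
  intro c hc hle hzero
  have hlag_c : g (s2 c) = c :=
    hmono1.injOn (hg_mem _).1 hc.1 ((hu c (Ico_subset_Icc_self hc)).trans (sub_eq_zero.1 hzero))
  have hvel := velocity_le_at_same_position (u := fun x => g (s2 x))
    hs1 hs2 hv1 hv2 hv1pos hinit_v hcross
    (hg_cont.comp_continuousOn hs2_cont) (fun x _ => (hg_mem _).1) hu hc
    (fun x hx => sub_nonneg.1 (hle x hx))
  rw [hlag_c] at hvel
  filter_upwards [eventually_lt_nhdsGT_of_deriv_nonneg_of_second_deriv_pos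
    (p := fun t => s2 t - s1 t)
    (fun x hx => (hs2 x (hc.1.trans hx)).sub (hs1 x (hc.1.trans hx)))
    ((hv2 c hc.1).sub (hv1 c hc.1)) (sub_nonneg.2 hvel)
    (fun h => sub_pos.2 (hcross c c hc.1 le_rfl (sub_eq_zero.1 hzero).symm (sub_eq_zero.1 h).symm))]
    with x hx
  exact hzero ▸ hx.le
end

section
/- Fix v_max > 0. Let a_lo1 ≤ a_hi1 and a_lo2 ≤ a_hi2 be two pairs of acceleration limits with a_lo1 ≤ a_lo2 and a_hi1 ≤ a_hi2, and let a1 ≤ a2 and w1 ≤ w2 be reals satisfying a_lo1 + w1 ≤ 0 and a_hi2 + w2 ≥ 0. Then for every v ∈ ℝ: Φ(v, a1, w1; a_lo1, a_hi1) ≤ Φ(v, a2, w2; a_lo2, a_hi2). -/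
/-- The saturated acceleration function of the paper's longitudinal vehicle
model (Eq. (4)) with position-independent acceleration limits `a_lo ≤ a_hi`:
`Φ(v, a, w) = 0` if (`v ≤ 0` and `a + w ≤ 0`) or (`v ≥ v_max` and `a + w ≥ 0`),
and `Φ(v, a, w) = max(a_lo, min(a_hi, a)) + w` otherwise. -/
noncomputable def Phi (vmax alo ahi v a w : ℝ) : ℝ :=
  if (v ≤ 0 ∧ a + w ≤ 0) ∨ (vmax ≤ v ∧ 0 ≤ a + w) then 0
  else max alo (min ahi a) + w

/-!
Away from the two saturation regions both sides are `clamp + w`, and clamping is monotone in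
the input and both limits. If only the left side saturates, it does so at `v ≤ 0` (at
`v ≥ v_max` the larger `a₂ + w₂ ≥ 0` would saturate the right side too), where an
unsaturated right side has `a₂ + w₂ > 0` and hence, thanks to `a_hi₂ + w₂ ≥ 0`, is
nonnegative. Symmetrically, if only the right side saturates, it does so at `v ≥ v_max`,
and `a_lo₁ + w₁ ≤ 0` makes the left side nonpositive.
-/

section Clamp

variable {α : Type*} [AddCommGroup α] [LinearOrder α] [IsOrderedAddMonoid α]

theorem zero_le_max_min_add {lo hi a w : α} (hhi : 0 ≤ hi + w) (ha : 0 ≤ a + w) :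
    0 ≤ max lo (min hi a) + w :=
  calc 0 ≤ min hi a + w := min_add_add_right hi a w ▸ le_min hhi ha
    _ ≤ max lo (min hi a) + w := by gcongr; exact le_max_right lo _

theorem max_min_add_nonpos {lo hi a w : α} (hlo : lo + w ≤ 0) (ha : a + w ≤ 0) :
    max lo (min hi a) + w ≤ 0 :=
  calc max lo (min hi a) + w ≤ max lo a + w := by gcongr; exact min_le_right hi a
    _ ≤ 0 := max_add_add_right lo a w ▸ max_le hlo ha

end Clamp

section Phi

variable {vmax alo ahi v a w : ℝ}

theorem Phi_eq_zero_of_nonpos (hv : v ≤ 0) (haw : a + w ≤ 0) : Phi vmax alo ahi v a w = 0 :=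
  if_pos (Or.inl ⟨hv, haw⟩)

theorem Phi_eq_zero_of_le (hv : vmax ≤ v) (haw : 0 ≤ a + w) : Phi vmax alo ahi v a w = 0 :=
  if_pos (Or.inr ⟨hv, haw⟩)

theorem zero_le_Phi_of_nonpos (hv : v ≤ 0) (hhi : 0 ≤ ahi + w) :
    0 ≤ Phi vmax alo ahi v a w := by
  unfold Phi
  split_ifs with hstop
  · exact le_rfl
  · push Not at hstop
    exact zero_le_max_min_add hhi (hstop.1 hv).le

theorem Phi_nonpos_of_le (hv : vmax ≤ v) (hlo : alo + w ≤ 0) :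
    Phi vmax alo ahi v a w ≤ 0 := by
  unfold Phi
  split_ifs with hstop
  · exact le_rfl
  · push Not at hstop
    exact max_min_add_nonpos hlo (hstop.2 hv).le

end Phi

theorem Phi_monotone_general
    (vmax : ℝ)
    (alo1 ahi1 alo2 ahi2 : ℝ)
    (hlo : alo1 ≤ alo2) (hhi : ahi1 ≤ ahi2)
    (a1 a2 w1 w2 : ℝ) (ha : a1 ≤ a2) (hw : w1 ≤ w2)
    (hbrake : alo1 + w1 ≤ 0) (hengine : 0 ≤ ahi2 + w2) :
    ∀ v : ℝ, Phi vmax alo1 ahi1 v a1 w1 ≤ Phi vmax alo2 ahi2 v a2 w2 := by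
  intro v
  have hsum : a1 + w1 ≤ a2 + w2 := add_le_add ha hw
  by_cases hstop1 : (v ≤ 0 ∧ a1 + w1 ≤ 0) ∨ (vmax ≤ v ∧ 0 ≤ a1 + w1)
  · rcases hstop1 with ⟨hv, haw⟩ | ⟨hv, haw⟩
    · rw [Phi_eq_zero_of_nonpos hv haw]
      exact zero_le_Phi_of_nonpos hv hengine
    · rw [Phi_eq_zero_of_le hv haw, Phi_eq_zero_of_le hv (haw.trans hsum)]
  by_cases hstop2 : (v ≤ 0 ∧ a2 + w2 ≤ 0) ∨ (vmax ≤ v ∧ 0 ≤ a2 + w2)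
  · rcases hstop2 with ⟨hv, haw⟩ | ⟨hv, haw⟩
    · exact absurd (Or.inl ⟨hv, hsum.trans haw⟩) hstop1
    · rw [Phi_eq_zero_of_le hv haw]
      exact Phi_nonpos_of_le hv hbrake
  rw [Phi, Phi, if_neg hstop1, if_neg hstop2]
  exact add_le_add (max_le_max hlo (min_le_min hhi ha)) hw

/-- **Monotonicity of the model's right-hand side** in the input, the
disturbance and both acceleration limits (core of inequality (12) in the
proof of the paper's Theorem 1). -/
theorem Phi_monotone
    (vmax : ℝ) (hvmax : 0 < vmax)
    (alo1 ahi1 alo2 ahi2 : ℝ)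
    (h1 : alo1 ≤ ahi1) (h2 : alo2 ≤ ahi2)
    (hlo : alo1 ≤ alo2) (hhi : ahi1 ≤ ahi2)
    (a1 a2 w1 w2 : ℝ) (ha : a1 ≤ a2) (hw : w1 ≤ w2)
    (hbrake : alo1 + w1 ≤ 0) (hengine : 0 ≤ ahi2 + w2) :
    ∀ v : ℝ, Phi vmax alo1 ahi1 v a1 w1 ≤ Phi vmax alo2 ahi2 v a2 w2 :=
  Phi_monotone_general vmax alo1 ahi1 alo2 ahi2 hlo hhi a1 a2 w1 w2 ha hw hbrake hengine
end

section
/- Fix v_max > 0, acceleration limits a_lo ≤ a_hi, a step size Δ > 0, a disturbance w : [0,∞) → ℝ with a_lo + w(t) ≤ 0 ≤ a_hi + w(t) for all t, and a non-increasing input a : [0,∞) → ℝ. Define the shifted input a_(t) = a(t + Δ) and the zero-order-hold input ā(t) = a(Δ·⌊t/Δ⌋). Then (i) a_(t) ≤ a(t) ≤ ā(t) for all t ≥ 0; and (ii) if v_, v, v̄ : [0,∞) → ℝ are differentiable functions with the same initial value satisfying v_' (t) = Φ(v_(t), a_(t), w(t); a_lo, a_hi), v'(t) = Φ(v(t), a(t),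 w(t); a_lo, a_hi), and v̄'(t) = Φ(v̄(t), ā(t), w(t); a_lo, a_hi) for all t, then for every t ≥ 0 the positions satisfy ∫₀ᵗ v_ ≤ ∫₀ᵗ v ≤ ∫₀ᵗ v̄. -/
/-!
Saturation preserves the sign of `a + w` (because `a_lo + w ≤ 0 ≤ a_hi + w`), so `Φ` is
non-increasing in the state and non-decreasing in the input. Hence wherever a solution driven by
a smaller input lies above one driven by a larger input, its derivative is the smaller one, and a
comparison principle keeps the ordering of the velocities; integrating gives the positions.
-/

open Set

theorem max_min_add_nonpos_s2 {alo ahi a w : ℝ} (hw : alo + w ≤ 0) (h : a + w ≤ 0) :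
    max alo (min ahi a) + w ≤ 0 := by
  have := min_le_right ahi a
  rcases max_cases alo (min ahi a) with ⟨he, _⟩ | ⟨he, _⟩ <;> linarith

theorem max_min_add_nonneg {alo ahi a w : ℝ} (hw : 0 ≤ ahi + w) (h : 0 ≤ a + w) :
    0 ≤ max alo (min ahi a) + w := by
  have := le_max_right alo (min ahi a)
  rcases min_cases ahi a with ⟨he, _⟩ | ⟨he, _⟩ <;> linarith

theorem Phi_le_Phi (vmax : ℝ) {alo ahi x y a₁ a₂ w : ℝ}
    (hlo : alo + w ≤ 0) (hhi : 0 ≤ ahi + w) (hxy : x ≤ y) (ha : a₂ ≤ a₁) :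
    Phi vmax alo ahi y a₂ w ≤ Phi vmax alo ahi x a₁ w := by
  unfold Phi
  split_ifs with hy hx hx
  · rfl
  · refine max_min_add_nonneg hhi ?_
    rcases hy with ⟨hy0, -⟩ | ⟨-, hy⟩
    · by_contra! h
      exact hx (Or.inl ⟨hxy.trans hy0, h.le⟩)
    · linarith
  · refine max_min_add_nonpos_s2 hlo ?_
    rcases hx with ⟨-, hx⟩ | ⟨hxv, -⟩
    · linarith
    · by_contra! h
      exact hy (Or.inr ⟨hxv.trans hxy, h.le⟩)
  · gcongr

theorem image_le_of_deriv_right_le_deriv_of_lt {f f' g g' : ℝ → ℝ} {a b : ℝ}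
    (hf : ContinuousOn f (Icc a b)) (hf' : ∀ x ∈ Ico a b, HasDerivWithinAt f (f' x) (Ici x) x)
    (hg : ContinuousOn g (Icc a b)) (hg' : ∀ x ∈ Ico a b, HasDerivWithinAt g (g' x) (Ici x) x)
    (ha : f a ≤ g a) (bound : ∀ x ∈ Ico a b, g x < f x → f' x ≤ g' x) :
    ∀ ⦃x⦄, x ∈ Icc a b → f x ≤ g x := by
  intro x hx
  have hxa : 0 < x - a + 1 := by linarith [hx.1]
  -- `g + ε (t - a + 1)` is a strict upper fence: where `f` meets it, `f > g`, so `f' ≤ g' < g' + ε`.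
  have fence : ∀ ε > 0, f x ≤ g x + ε * (x - a + 1) := fun ε hε => by
    refine image_le_of_deriv_right_lt_deriv_boundary' hf hf' (B := fun t => g t + ε * (t - a + 1))
      (B' := fun t => g' t + ε) (by simpa using ha.trans (le_add_of_nonneg_right hε.le)) ?_ ?_ ?_ hx
    · fun_prop
    · intro t ht
      have hlin : HasDerivAt (fun t => ε * (t - a + 1)) ε t := by
        simpa using ((hasDerivAt_id' t).sub_const a |>.add_const 1).const_mul ε
      exact (hg' t ht).fun_add hlin.hasDerivWithinAt
    · intro t ht hft
      have hgf : g t < f t := by rw [hft]; nlinarith [ht.1]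
      linarith [bound t ht hgf]
  refine le_of_forall_pos_le_add fun δ hδ => ?_
  simpa [div_mul_cancel₀ δ hxa.ne'] using fence (δ / (x - a + 1)) (div_pos hδ hxa)

theorem Phi_solution_le (vmax : ℝ) {alo ahi : ℝ} {w b c x y : ℝ → ℝ}
    (hw : ∀ t, 0 ≤ t → alo + w t ≤ 0 ∧ 0 ≤ ahi + w t) (hcb : ∀ t, 0 ≤ t → c t ≤ b t)
    (hx : ∀ t, 0 ≤ t → HasDerivAt x (Phi vmax alo ahi (x t) (b t) (w t)) t)
    (hy : ∀ t, 0 ≤ t → HasDerivAt y (Phi vmax alo ahi (y t) (c t) (w t)) t)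
    (h0 : y 0 ≤ x 0) (t : ℝ) (ht : 0 ≤ t) : y t ≤ x t :=
  image_le_of_deriv_right_le_deriv_of_lt (a := 0) (b := t)
    (fun s hs => (hy s hs.1).continuousAt.continuousWithinAt)
    (fun s hs => (hy s hs.1).hasDerivWithinAt)
    (fun s hs => (hx s hs.1).continuousAt.continuousWithinAt)
    (fun s hs => (hx s hs.1).hasDerivWithinAt) h0
    (fun s hs hlt => Phi_le_Phi vmax (hw s hs.1).1 (hw s hs.1).2 hlt.le (hcb s hs.1))
    ⟨ht, le_rfl⟩

theorem intervalIntegrable_of_forall_hasDerivAt {f f' : ℝ → ℝ} {t : ℝ} (ht : 0 ≤ t)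
    (hf : ∀ s, 0 ≤ s → HasDerivAt f (f' s) s) :
    IntervalIntegrable f MeasureTheory.volume 0 t :=
  ContinuousOn.intervalIntegrable fun s hs =>
    (hf s (by rw [uIcc_of_le ht] at hs; exact hs.1)).continuousAt.continuousWithinAt

theorem mul_floor_div_mem_Icc {Δ t : ℝ} (hΔ : 0 < Δ) (ht : 0 ≤ t) :
    Δ * (⌊t / Δ⌋ : ℤ) ∈ Icc 0 t := by
  refine ⟨mul_nonneg hΔ.le (by exact_mod_cast Int.floor_nonneg.mpr (div_nonneg ht hΔ.le)), ?_⟩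
  calc Δ * (⌊t / Δ⌋ : ℤ) ≤ Δ * (t / Δ) := mul_le_mul_of_nonneg_left (Int.floor_le _) hΔ.le
    _ = t := mul_div_cancel₀ t hΔ.ne'

theorem reachable_position_bounds_general
    (vmax alo ahi Δ : ℝ) (hΔ : 0 < Δ)
    (w : ℝ → ℝ)
    (hw : ∀ t, 0 ≤ t → alo + w t ≤ 0 ∧ 0 ≤ ahi + w t)
    (a : ℝ → ℝ)
    (hmono : ∀ t1 t2, 0 ≤ t1 → t1 ≤ t2 → a t2 ≤ a t1)
    (vlo v vhi : ℝ → ℝ)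
    (hvlo : ∀ t, 0 ≤ t →
      HasDerivAt vlo (Phi vmax alo ahi (vlo t) (a (t + Δ)) (w t)) t)
    (hv : ∀ t, 0 ≤ t →
      HasDerivAt v (Phi vmax alo ahi (v t) (a t) (w t)) t)
    (hvhi : ∀ t, 0 ≤ t →
      HasDerivAt vhi (Phi vmax alo ahi (vhi t) (a (Δ * (⌊t / Δ⌋ : ℤ))) (w t)) t)
    (hinit1 : vlo 0 = v 0) (hinit2 : v 0 = vhi 0) :
    (∀ t, 0 ≤ t → a (t + Δ) ≤ a t ∧ a t ≤ a (Δ * (⌊t / Δ⌋ : ℤ))) ∧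
    (∀ t, 0 ≤ t →
      (∫ τ in (0:ℝ)..t, vlo τ) ≤ (∫ τ in (0:ℝ)..t, v τ) ∧
      (∫ τ in (0:ℝ)..t, v τ) ≤ ∫ τ in (0:ℝ)..t, vhi τ) := by
  have hinput : ∀ t, 0 ≤ t → a (t + Δ) ≤ a t ∧ a t ≤ a (Δ * (⌊t / Δ⌋ : ℤ)) := fun t ht =>
    ⟨hmono _ _ ht (by linarith),
      hmono _ _ (mul_floor_div_mem_Icc hΔ ht).1 (mul_floor_div_mem_Icc hΔ ht).2⟩
  have hlo := Phi_solution_le vmax hw (fun t ht => (hinput t ht).1) hv hvlo hinit1.le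
  have hhi := Phi_solution_le vmax hw (fun t ht => (hinput t ht).2) hvhi hv hinit2.le
  refine ⟨hinput, fun t ht => ⟨?_, ?_⟩⟩
  · exact intervalIntegral.integral_mono_on ht (intervalIntegrable_of_forall_hasDerivAt ht hvlo)
      (intervalIntegrable_of_forall_hasDerivAt ht hv) fun s hs => hlo s hs.1
  · exact intervalIntegral.integral_mono_on ht (intervalIntegrable_of_forall_hasDerivAt ht hv)
      (intervalIntegrable_of_forall_hasDerivAt ht hvhi) fun s hs => hhi s hs.1

/-- **Bounds of Reachable Position** (paper's Corollary 1): for a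
non-increasing input `a`, the `Δ`-shifted input `t ↦ a (t + Δ)` and the
zero-order-hold input `t ↦ a (Δ·⌊t/Δ⌋)` bracket the input pointwise, and
consequently the corresponding travelled distances bracket the true
travelled distance. -/
theorem reachable_position_bounds
    (vmax alo ahi Δ : ℝ) (hvmax : 0 < vmax) (hlim : alo ≤ ahi) (hΔ : 0 < Δ)
    (w : ℝ → ℝ)
    (hw : ∀ t, 0 ≤ t → alo + w t ≤ 0 ∧ 0 ≤ ahi + w t)
    (a : ℝ → ℝ)
    (hmono : ∀ t1 t2, 0 ≤ t1 → t1 ≤ t2 → a t2 ≤ a t1)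
    (vlo v vhi : ℝ → ℝ)
    (hvlo : ∀ t, 0 ≤ t →
      HasDerivAt vlo (Phi vmax alo ahi (vlo t) (a (t + Δ)) (w t)) t)
    (hv : ∀ t, 0 ≤ t →
      HasDerivAt v (Phi vmax alo ahi (v t) (a t) (w t)) t)
    (hvhi : ∀ t, 0 ≤ t →
      HasDerivAt vhi (Phi vmax alo ahi (vhi t) (a (Δ * (⌊t / Δ⌋ : ℤ))) (w t)) t)
    (hinit1 : vlo 0 = v 0) (hinit2 : v 0 = vhi 0) :
    (∀ t, 0 ≤ t → a (t + Δ) ≤ a t ∧ a t ≤ a (Δ * (⌊t / Δ⌋ : ℤ))) ∧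
    (∀ t, 0 ≤ t →
      (∫ τ in (0:ℝ)..t, vlo τ) ≤ (∫ τ in (0:ℝ)..t, v τ) ∧
      (∫ τ in (0:ℝ)..t, v τ) ≤ ∫ τ in (0:ℝ)..t, vhi τ) :=
  reachable_position_bounds_general vmax alo ahi Δ hΔ w hw a hmono vlo v vhi hvlo hv hvhi hinit1
    hinit2
end

section
/- Consider states σ = (A, C) with A : ℝ (the braking limit) and C : Option ℝ (the braking limit candidate), and the step relation Step σ σ' holding iff one of: (a) σ' = σ; (b) there exists c < A with σ' = (A, some c); (c) there exists a' ≥ A with σ' = (a', none); (d) C = some c and there exists c_f ≤ A such that, setting A' = max(c_f, c), σ' = (A', none) if A' = c and σ' = (A', some c) otherwise. Then the predicate P(A, C) := (for all c, C = some c implies c ≤ A) is an inductive invariant: if P(σ) and Step σ σ', then P(σ'). Consequently P holds in every state reachable from an initial state with C = none. -/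
/-!
Each step either keeps the state, replaces the candidate by one strictly below the unchanged
limit, deletes the candidate, or raises the limit to `max c_f c`, which is at least the candidate
`c`; so no step can produce a candidate above the limit, and an induction along the execution
finishes the proof.
-/

/-- Step relation of the abstract braking-limit protocol (paper's
Algorithm 4): a state is a pair `(A, C)` of the current braking limit `A`
and the optional unconfirmed candidate `C`.
(a) stutter; (b) set a new, stronger candidate (line 6); (c) adopt a weaker
verified braking limit, deleting the candidate (lines 8 and 11); (d) adopt
the maximum of a follower-confirmed value `c_f ≤ A` and the candidate `c`
(lines 23–25), deleting the candidate exactly if it was adopted. -/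
def Step (σ σ' : ℝ × Option ℝ) : Prop :=
  σ' = σ ∨
  (∃ c : ℝ, c < σ.1 ∧ σ' = (σ.1, some c)) ∨
  (∃ a' : ℝ, σ.1 ≤ a' ∧ σ' = (a', none)) ∨
  (∃ c cf : ℝ, σ.2 = some c ∧ cf ≤ σ.1 ∧
    σ' = (max cf c, if max cf c = c then none else some c))

/-- The candidate invariant: the candidate, when present, never exceeds the
current braking limit. -/
def CandInv (σ : ℝ × Option ℝ) : Prop :=
  ∀ c : ℝ, σ.2 = some c → c ≤ σ.1

theorem Relation.ReflTransGen.invariant {α : Type*} {r : α → α → Prop} {P : α → Prop}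
    (hP : ∀ a b, P a → r a b → P b) {a b : α} (hab : Relation.ReflTransGen r a b) (ha : P a) :
    P b := by
  induction hab with
  | refl => exact ha
  | tail _ hbc ih => exact hP _ _ ih hbc

theorem candInv_of_snd_eq_none {σ : ℝ × Option ℝ} (h : σ.2 = none) : CandInv σ := by
  intro c hc
  simp [h] at hc

theorem candInv_some_of_le {A c : ℝ} (h : c ≤ A) : CandInv (A, some c) := by
  rintro x ⟨⟩
  exact h

theorem candInv_max_adopt (cf c : ℝ) :
    CandInv (max cf c, if max cf c = c then none else some c) := by
  split_ifs
  · exact candInv_of_snd_eq_none rfl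
  · exact candInv_some_of_le (le_max_right cf c)

theorem CandInv.step {σ σ' : ℝ × Option ℝ} (hσ : CandInv σ) (h : Step σ σ') : CandInv σ' := by
  obtain rfl | ⟨c, hc, rfl⟩ | ⟨a', -, rfl⟩ | ⟨c, cf, -, -, rfl⟩ := h
  · exact hσ
  · exact candInv_some_of_le hc.le
  · exact candInv_of_snd_eq_none rfl
  · exact candInv_max_adopt cf c

/-- **Candidate is not greater than braking limit** (paper's Lemma 1):
`CandInv` is an inductive invariant of `Step`, hence holds in every state
reachable from an initial state without a candidate. -/
theorem candidate_invariant :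
    (∀ σ σ' : ℝ × Option ℝ, CandInv σ → Step σ σ' → CandInv σ') ∧
    (∀ σ0 σ : ℝ × Option ℝ, σ0.2 = none →
      Relation.ReflTransGen Step σ0 σ → CandInv σ) :=
  ⟨fun _ _ hσ h => hσ.step h,
    fun _ _ h0 hreach => hreach.invariant (fun _ _ hσ h => hσ.step h) (candInv_of_snd_eq_none h0)⟩
end

section
/- Let A : ℕ → ℝ, C : ℕ → Option ℝ, and T : ℕ → ℕ be sequences satisfying: (i) for all k and c, C k = some c implies c ≤ A k; (ii) T is monotone non-decreasing and T k ≤ k for all k; (iii) if A (k+1) > A k then T (k+1) > k; (iv) if C k ≠ none and C (k+1) = none then T (k+1) > k; (v) if C k = some c and C (k+1) = some c' with c' > c then T (k+1) > k. Define S k = c if C k = some c, and S k = A k otherwise. Then for all k0 < k1 with S k0 < S k1, it holds that T k1 > k0. -/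
/-!
If the threshold `T` is not reset during the steps `k0, …, k1 - 1`, i.e. `T k1 ≤ k0`, then by
monotonicity `T (k + 1) ≤ k` at each of these steps. Rules (iii)–(v) then forbid every way the
sent value could grow in one step — the braking limit rising, the candidate being deleted, the
candidate rising — while a newly created candidate is at most the braking limit by (i). So the sent
value is antitone on `[k0, k1]`, contradicting `S k0 < S k1`.
-/

theorem Option.getD_le_getD {α : Type*} [Preorder α] {o o' : Option α} {a a' : α}
    (ha : a' ≤ a) (ho' : ∀ c', o' = some c' → c' ≤ a') (hnone : o ≠ none → o' ≠ none)
    (hsome : ∀ c c', o = some c → o' = some c' → c' ≤ c) : o'.getD a' ≤ o.getD a := by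
  rcases o with _ | c <;> rcases o' with _ | c'
  · exact ha
  · exact (ho' c' rfl).trans ha
  · exact absurd rfl (hnone (Option.some_ne_none c))
  · exact hsome c c' rfl rfl

theorem getD_succ_le_getD_of_no_reset (A : ℕ → ℝ) (C : ℕ → Option ℝ) (T : ℕ → ℕ)
    (hInv : ∀ k c, C k = some c → c ≤ A k)
    (hAinc : ∀ k, A k < A (k + 1) → k < T (k + 1))
    (hCdel : ∀ k, C k ≠ none → C (k + 1) = none → k < T (k + 1))
    (hCinc : ∀ k c c', C k = some c → C (k + 1) = some c' → c < c' → k < T (k + 1))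
    {k : ℕ} (hk : T (k + 1) ≤ k) : (C (k + 1)).getD (A (k + 1)) ≤ (C k).getD (A k) :=
  Option.getD_le_getD (not_lt.1 fun h ↦ (hAinc k h).not_ge hk) (hInv (k + 1))
    (fun hne hnone ↦ (hCdel k hne hnone).not_ge hk)
    (fun c c' hc hc' ↦ not_lt.1 fun h ↦ (hCinc k c c' hc hc' h).not_ge hk)

theorem time_reset_general
    (A : ℕ → ℝ) (C : ℕ → Option ℝ) (T : ℕ → ℕ)
    (hInv : ∀ k c, C k = some c → c ≤ A k)
    (hTmono : Monotone T)
    (hAinc : ∀ k, A k < A (k + 1) → k < T (k + 1))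
    (hCdel : ∀ k, C k ≠ none → C (k + 1) = none → k < T (k + 1))
    (hCinc : ∀ k c c', C k = some c → C (k + 1) = some c' → c < c' →
      k < T (k + 1)) :
    ∀ k0 k1, k0 < k1 → (C k0).getD (A k0) < (C k1).getD (A k1) →
      k0 < T k1 := by
  intro k0 k1 hlt hS
  by_contra! hT
  have hanti : AntitoneOn (fun k ↦ (C k).getD (A k)) (Set.Icc k0 k1) := by
    refine antitoneOn_of_succ_le Set.ordConnected_Icc fun k _ hk hk' ↦ ?_
    rw [Order.succ_eq_add_one] at hk' ⊢
    exact getD_succ_le_getD_of_no_reset A C T hInv hAinc hCdel hCinc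
      ((hTmono hk'.2).trans (hT.trans hk.1))
  exact (hanti ⟨le_rfl, hlt.le⟩ ⟨hlt.le, le_rfl⟩ hlt.le).not_gt hS

/-- **Increasing sent braking limit gives time reset** (abstraction of the
paper's Lemma 3 for Algorithm 4).  At each step `k` the vehicle stores a
braking limit `A k`, an optional candidate `C k` and an acceptance-time
threshold `T k`; the value it sends is the candidate if present, otherwise
the braking limit, i.e. `(C k).getD (A k)`.  If the sent value strictly
increases between steps `k0 < k1`, then `T k1 > k0`. -/
theorem time_reset
    (A : ℕ → ℝ) (C : ℕ → Option ℝ) (T : ℕ → ℕ)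
    (hInv : ∀ k c, C k = some c → c ≤ A k)
    (hTmono : Monotone T) (hTle : ∀ k, T k ≤ k)
    (hAinc : ∀ k, A k < A (k + 1) → k < T (k + 1))
    (hCdel : ∀ k, C k ≠ none → C (k + 1) = none → k < T (k + 1))
    (hCinc : ∀ k c c', C k = some c → C (k + 1) = some c' → c < c' →
      k < T (k + 1)) :
    ∀ k0 k1, k0 < k1 → (C k0).getD (A k0) < (C k1).getD (A k1) →
      k0 < T k1 :=
  time_reset_general A C T hInv hTmono hAinc hCdel hCinc
end

section
/- Consider a leader–follower system with global time steps k ∈ ℕ and state (A k : ℝ, C k : Option ℝ, T k : ℕ, b k : ℝ, ρ k : ℕ), where A is the leader's braking limit, C its candidate, T its acceptance-time threshold, b the follower's stored braking limit for the leader, and ρ the send-timestamp of the message the follower's stored value came from. Define S k = c if C k = some c and S k = A k otherwise. Assume: (I) for all k and c, C k = some c implies c ≤ A k; (II) T is non-decreasing with T k ≤ k; (III) if A(k+1) > A k then C(k+1) = none and T(k+1) = k+1; (IV) if C k ≠ none and C(k+1) = none then T(k+1) = k+1; (V) if C k = some c and C(k+1) = some c' with c' > c then T(k+1) = k+1; (VI)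 if A(k+1) < A k then there exist c with C k = some c and a step m ≤ k such that b m ≤ A k, ρ m ≥ T k, and A(k+1) = max(b m, c); (VII) at each step either (b, ρ) is unchanged, i.e. (b(k+1), ρ(k+1)) = (b k, ρ k) and then also one leader transition occurs, or the leader state is unchanged and there exists j with ρ k < j ≤ k+1, b(k+1) = S j, and ρ(k+1) = j; (VIII) initially C 0 = none, T 0 = 0, ρ 0 = 0 and b 0 = A 0. Then for every k: b k ≤ A k. -/
/-- The value the leader sends at step `k`: the candidate if present,
otherwise its braking limit. -/
noncomputable def sentValue (A : ℕ → ℝ) (C : ℕ → Option ℝ) (k : ℕ) : ℝ :=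
  (C k).getD (A k)

/-!
The invariant is that every message `(S j, j)` with `ρ k ≤ j ≤ k`, the stored one and all newer
ones, satisfies `S j ≤ A k`; with `b k = S (ρ k)` it gives `b k ≤ A k`. A decrease of `A` at
step `k` is confirmed by a follower state `m` with `T k ≤ ρ m`. Since `T` is reset whenever `S`
could grow, `S` is non-increasing on `[T k, k]`, so all those messages are still bounded by
`b m = S (ρ m)`, which the new limit dominates.
-/

section Follower

variable {α : Type*} {S b : ℕ → α} {ρ : ℕ → ℕ}

def FollowerStep (S b : ℕ → α) (ρ : ℕ → ℕ) (k : ℕ) : Prop :=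
  (b (k + 1) = b k ∧ ρ (k + 1) = ρ k) ∨
    ∃ j, ρ k < j ∧ j ≤ k + 1 ∧ b (k + 1) = S j ∧ ρ (k + 1) = j

theorem monotone_of_followerStep (h : ∀ k, FollowerStep S b ρ k) : Monotone ρ :=
  monotone_nat_of_le_succ fun k => by
    rcases h k with ⟨-, h⟩ | ⟨j, hj, -, -, rfl⟩ <;> omega

theorem le_self_of_followerStep (h : ∀ k, FollowerStep S b ρ k) (hρ0 : ρ 0 = 0) (k : ℕ) :
    ρ k ≤ k := by
  induction k with
  | zero => omega
  | succ k ih => rcases h k with ⟨-, h⟩ | ⟨j, -, hj, -, rfl⟩ <;> omega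

theorem eq_comp_of_followerStep (h : ∀ k, FollowerStep S b ρ k) (hb0 : b 0 = S (ρ 0))
    (k : ℕ) : b k = S (ρ k) := by
  induction k with
  | zero => exact hb0
  | succ k ih =>
    rcases h k with ⟨hb, hρ⟩ | ⟨j, -, -, hb, hρ⟩
    · rw [hb, hρ, ih]
    · rw [hb, hρ]

end Follower

section Invariant

variable {α : Type*} {T ρ : ℕ → ℕ}

theorem le_of_threshold_le [Preorder α] {f : ℕ → α} (hT : Monotone T)
    (hf : ∀ n, T (n + 1) ≤ n → f (n + 1) ≤ f n) {k i j : ℕ}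
    (hTi : T k ≤ i) (hij : i ≤ j) (hjk : j ≤ k) : f j ≤ f i := by
  induction j, hij using Nat.le_induction with
  | base => exact le_rfl
  | succ n hin ih =>
    exact (hf n ((hT hjk).trans (by omega))).trans (ih (by omega))

theorem le_of_stamp_le [LinearOrder α] {S A b : ℕ → α} (hSA : ∀ k, S k ≤ A k)
    (hT : Monotone T) (hS : ∀ n, T (n + 1) ≤ n → S (n + 1) ≤ S n)
    (hdecr : ∀ k, A (k + 1) < A k → ∃ m ≤ k, T k ≤ ρ m ∧ b m ≤ A (k + 1))
    (hstep : ∀ k, ρ (k + 1) = ρ k ∨ (A (k + 1) = A k ∧ ρ k < ρ (k + 1)))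
    (hb : ∀ k, b k = S (ρ k)) (hρ : Monotone ρ) :
    ∀ k j, ρ k ≤ j → j ≤ k → S j ≤ A k := by
  intro k
  induction k with
  | zero =>
    intro j _ hj
    obtain rfl : j = 0 := by omega
    exact hSA 0
  | succ k ih =>
    intro j hρj hj
    obtain hj | rfl := Nat.le_succ_iff.mp hj
    swap
    · exact hSA _
    rcases hstep k with hρk | ⟨hA, hρk⟩
    · rcases le_or_gt (A k) (A (k + 1)) with hA | hA
      · exact (ih j (hρk ▸ hρj) hj).trans hA
      obtain ⟨m, hmk, hTm, hbm⟩ := hdecr k hA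
      calc S j
          ≤ S (ρ m) := le_of_threshold_le hT hS hTm ((hρ hmk).trans (hρk ▸ hρj)) hj
        _ = b m := (hb m).symm
        _ ≤ A (k + 1) := hbm
    · exact hA ▸ ih j (by omega) hj

end Invariant

section SentValue

variable {A : ℕ → ℝ} {C : ℕ → Option ℝ} {T : ℕ → ℕ}

theorem sentValue_le (hI : ∀ k c, C k = some c → c ≤ A k) (k : ℕ) :
    sentValue A C k ≤ A k := by
  cases h : C k with
  | none => simp [sentValue, h]
  | some c => simpa [sentValue, h] using hI k c h

theorem sentValue_succ_le_of_no_reset {j : ℕ} (hI : ∀ c, C (j + 1) = some c → c ≤ A (j + 1))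
    (hA : A j < A (j + 1) → T (j + 1) = j + 1)
    (hC : C j ≠ none → C (j + 1) = none → T (j + 1) = j + 1)
    (hc : ∀ c c', C j = some c → C (j + 1) = some c' → c < c' → T (j + 1) = j + 1)
    (hT : T (j + 1) ≤ j) :
    sentValue A C (j + 1) ≤ sentValue A C j := by
  have hAj : A (j + 1) ≤ A j := by
    by_contra! h
    have := hA h
    omega
  cases h₁ : C (j + 1) with
  | none =>
    have h₀ : C j = none := by
      by_contra h
      have := hC h h₁
      omega
    simpa [sentValue, h₀, h₁] using hAj
  | some c' =>
    cases h₀ : C j with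
    | none => simpa [sentValue, h₀, h₁] using (hI _ h₁).trans hAj
    | some c =>
      have : c' ≤ c := by
        by_contra! h
        have := hc c c' h₀ h₁ h
        omega
      simpa [sentValue, h₀, h₁] using this

end SentValue

theorem braking_limit_invariance_general
    (A : ℕ → ℝ) (C : ℕ → Option ℝ) (T : ℕ → ℕ) (b : ℕ → ℝ) (ρ : ℕ → ℕ)
    -- (I) candidate invariant
    (hI : ∀ k c, C k = some c → c ≤ A k)
    -- (II) threshold is non-decreasing and never in the future
    (hII : Monotone T)
    -- (III) braking-limit increase deletes the candidate and resets T
    (hIII : ∀ k, A k < A (k + 1) → C (k + 1) = none ∧ T (k + 1) = k + 1)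
    -- (IV) candidate deletion resets T
    (hIV : ∀ k, C k ≠ none → C (k + 1) = none → T (k + 1) = k + 1)
    -- (V) candidate increase resets T
    (hV : ∀ k c c', C k = some c → C (k + 1) = some c' → c < c' →
      T (k + 1) = k + 1)
    -- (VI) a braking-limit decrease is a confirmed adoption of the candidate
    (hVI : ∀ k, A (k + 1) < A k → ∃ c, C k = some c ∧ ∃ m ≤ k,
      b m ≤ A k ∧ T k ≤ ρ m ∧ A (k + 1) = max (b m) c)
    -- (VII) either the follower state is unchanged, or the leader state is
    -- unchanged and the follower accepts a strictly newer message `(S j, j)`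
    (hVII : ∀ k,
      (b (k + 1) = b k ∧ ρ (k + 1) = ρ k) ∨
      (A (k + 1) = A k ∧ C (k + 1) = C k ∧ T (k + 1) = T k ∧
        ∃ j, ρ k < j ∧ j ≤ k + 1 ∧ b (k + 1) = sentValue A C j ∧
          ρ (k + 1) = j))
    -- (VIII) initial conditions
    (hC0 : C 0 = none) (hρ0 : ρ 0 = 0) (hb0 : b 0 = A 0) :
    ∀ k, b k ≤ A k := by
  have hstep : ∀ k, FollowerStep (sentValue A C) b ρ k := fun k =>
    (hVII k).imp_right fun ⟨_, _, _, h⟩ => h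
  have hb : ∀ k, b k = sentValue A C (ρ k) :=
    eq_comp_of_followerStep hstep (by simp [sentValue, hb0, hρ0, hC0])
  have hinv : ∀ k j, ρ k ≤ j → j ≤ k → sentValue A C j ≤ A k := by
    refine le_of_stamp_le (sentValue_le hI) hII ?_ ?_ ?_ hb (monotone_of_followerStep hstep)
    · exact fun n => sentValue_succ_le_of_no_reset (hI (n + 1)) (fun h => (hIII n h).2)
        (hIV n) (hV n)
    · intro k hA
      obtain ⟨c, -, m, hm, -, hTm, hAm⟩ := hVI k hA
      exact ⟨m, hm, hTm, hAm ▸ le_max_left _ _⟩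
    · intro k
      rcases hVII k with ⟨-, hρ⟩ | ⟨hA, -, -, j, hj, -, -, rfl⟩
      exacts [Or.inl hρ, Or.inr ⟨hA, hj⟩]
  exact fun k => hb k ▸ hinv k (ρ k) le_rfl (le_self_of_followerStep hstep hρ0 k)

/-- **Braking Limit Invariance** (paper's Theorem 2) for a leader–follower
pair with unreliable, arbitrarily delayed communication.  The leader's state
is `(A k, C k, T k)` (braking limit, candidate, acceptance-time threshold)
and the follower's state is `(b k, ρ k)` (stored braking limit for the
leader and the send-timestamp of the message it came from).  Under the
protocol rules (I)–(VIII), the braking limit the follower assumes for the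
leader never exceeds the leader's actual braking limit: `b k ≤ A k`. -/
theorem braking_limit_invariance
    (A : ℕ → ℝ) (C : ℕ → Option ℝ) (T : ℕ → ℕ) (b : ℕ → ℝ) (ρ : ℕ → ℕ)
    -- (I) candidate invariant
    (hI : ∀ k c, C k = some c → c ≤ A k)
    -- (II) threshold is non-decreasing and never in the future
    (hII : Monotone T) (hII' : ∀ k, T k ≤ k)
    -- (III) braking-limit increase deletes the candidate and resets T
    (hIII : ∀ k, A k < A (k + 1) → C (k + 1) = none ∧ T (k + 1) = k + 1)
    -- (IV) candidate deletion resets T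
    (hIV : ∀ k, C k ≠ none → C (k + 1) = none → T (k + 1) = k + 1)
    -- (V) candidate increase resets T
    (hV : ∀ k c c', C k = some c → C (k + 1) = some c' → c < c' →
      T (k + 1) = k + 1)
    -- (VI) a braking-limit decrease is a confirmed adoption of the candidate
    (hVI : ∀ k, A (k + 1) < A k → ∃ c, C k = some c ∧ ∃ m ≤ k,
      b m ≤ A k ∧ T k ≤ ρ m ∧ A (k + 1) = max (b m) c)
    -- (VII) either the follower state is unchanged, or the leader state is
    -- unchanged and the follower accepts a strictly newer message `(S j, j)`
    (hVII : ∀ k,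
      (b (k + 1) = b k ∧ ρ (k + 1) = ρ k) ∨
      (A (k + 1) = A k ∧ C (k + 1) = C k ∧ T (k + 1) = T k ∧
        ∃ j, ρ k < j ∧ j ≤ k + 1 ∧ b (k + 1) = sentValue A C j ∧
          ρ (k + 1) = j))
    -- (VIII) initial conditions
    (hC0 : C 0 = none) (hT0 : T 0 = 0) (hρ0 : ρ 0 = 0) (hb0 : b 0 = A 0) :
    ∀ k, b k ≤ A k :=
  braking_limit_invariance_general A C T b ρ hI hII hIII hIV hV hVI hVII hC0 hρ0 hb0
end

section
/- Fix v_max > 0, an engine limit a_hi, braking limits a_lo' ≤ a_lo ≤ a_hi, an input a : [0,∞) → ℝ and a disturbance w : [0,∞) → ℝ with a_lo' + w(t) ≤ 0 ≤ a_hi + w(t) for all t. Let v, v' : [0,∞) → ℝ be differentiable with v'(t)'s dynamics v̇(t) = Φ(v(t), a(t), w(t); a_lo, a_hi) and v̇'(t) = Φ(v'(t), a(t), w(t); a_lo', a_hi), and v'(0) = v(0). Let s(t) = s0 + ∫₀ᵗ v and s'(t) = s0 + ∫₀ᵗ v'. Then s'(t) ≤ s(t) for all t ≥ 0; in particular, for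 any barrier B : [0,∞) → ℝ, if s(t) < B(t) for all t, then s'(t) < B(t) for all t. -/
/-!
A stronger braking limit and a larger velocity both give a smaller saturated acceleration,
as long as the disturbance can be overcome by both limits. So once the strongly braked
velocity `v'` catches up with `v` it cannot overtake it, and since `v' 0 = v 0` a comparison
argument gives `v' ≤ v` for all time; integrating yields the position bound.
-/

open Set

lemma Phi_le_Phi_s12 {vmax alo alo' ahi a w u u' : ℝ} (hu : u ≤ u') (hlo : alo' ≤ alo)
    (hlo_w : alo' + w ≤ 0) (hhi_w : 0 ≤ ahi + w) :
    Phi vmax alo' ahi u' a w ≤ Phi vmax alo ahi u a w := by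
  unfold Phi
  split_ifs with hsat' hsat hsat
  · rfl
  · rcases hsat' with ⟨hu', haw⟩ | ⟨-, haw⟩
    · exact absurd (Or.inl ⟨hu.trans hu', haw⟩) hsat
    · have : -w ≤ min ahi a := le_min (by linarith) (by linarith)
      linarith [le_max_right alo (min ahi a)]
  · rcases hsat with ⟨-, haw⟩ | ⟨hu_max, haw⟩
    · have : max alo' (min ahi a) ≤ -w :=
        max_le (by linarith) ((min_le_right _ _).trans (by linarith))
      linarith
    · exact absurd (Or.inr ⟨hu_max.trans hu, haw⟩) hsat'
  · gcongr

theorem image_le_of_deriv_le_of_ge {f g f' g' : ℝ → ℝ} {a b : ℝ}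
    (hf : ContinuousOn f (Icc a b)) (hf' : ∀ x ∈ Ico a b, HasDerivWithinAt f (f' x) (Ici x) x)
    (hg : ContinuousOn g (Icc a b)) (hg' : ∀ x ∈ Ico a b, HasDerivWithinAt g (g' x) (Ici x) x)
    (ha : f a ≤ g a) (hbound : ∀ x ∈ Ico a b, g x ≤ f x → f' x ≤ g' x) :
    ∀ ⦃x⦄, x ∈ Icc a b → f x ≤ g x := by
  -- Compare `f` with the strict barrier `g + ε (1 + x - a)` and let `ε → 0`.
  have hbarrier : ∀ ε > 0, ∀ ⦃x⦄, x ∈ Icc a b → f x ≤ g x + ε * (1 + (x - a)) := by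
    intro ε hε
    have hlin : ∀ x, HasDerivAt (fun y => ε * (1 + (y - a))) ε x := fun x => by
      simpa using (((hasDerivAt_id x).sub_const a).const_add 1).const_mul ε
    refine image_le_of_deriv_right_lt_deriv_boundary' hf hf' (by linarith)
      (hg.add (by fun_prop)) (fun x hx => (hg' x hx).add (hlin x).hasDerivWithinAt) ?_
    intro x hx hfx
    have : g x ≤ f x := by nlinarith [hx.1]
    linarith [hbound x hx this]
  intro x hx
  refine le_of_forall_pos_le_add fun δ hδ => ?_
  have hpos : 0 < 1 + (x - a) := by linarith [hx.1]
  simpa [div_mul_cancel₀ δ hpos.ne'] using hbarrier (δ / (1 + (x - a))) (div_pos hδ hpos) hx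

theorem ego_braking_limit_update_general
    (vmax ahi alo alo' s0 : ℝ)
    (hlo : alo' ≤ alo)
    (a w : ℝ → ℝ)
    (hw : ∀ t, 0 ≤ t → alo' + w t ≤ 0 ∧ 0 ≤ ahi + w t)
    (v v' : ℝ → ℝ)
    (hv : ∀ t, 0 ≤ t → HasDerivAt v (Phi vmax alo ahi (v t) (a t) (w t)) t)
    (hv' : ∀ t, 0 ≤ t → HasDerivAt v' (Phi vmax alo' ahi (v' t) (a t) (w t)) t)
    (hinit : v' 0 = v 0) :
    (∀ t, 0 ≤ t →
      s0 + (∫ τ in (0:ℝ)..t, v' τ) ≤ s0 + ∫ τ in (0:ℝ)..t, v τ) ∧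
    (∀ B : ℝ → ℝ,
      (∀ t, 0 ≤ t → s0 + (∫ τ in (0:ℝ)..t, v τ) < B t) →
      ∀ t, 0 ≤ t → s0 + (∫ τ in (0:ℝ)..t, v' τ) < B t) := by
  have hcont : ∀ t, ContinuousOn v (Icc 0 t) :=
    fun _ x hx => (hv x hx.1).continuousAt.continuousWithinAt
  have hcont' : ∀ t, ContinuousOn v' (Icc 0 t) :=
    fun _ x hx => (hv' x hx.1).continuousAt.continuousWithinAt
  have hvel : ∀ t, 0 ≤ t → v' t ≤ v t := fun t ht =>
    image_le_of_deriv_le_of_ge (hcont' t) (fun x hx => (hv' x hx.1).hasDerivWithinAt)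
      (hcont t) (fun x hx => (hv x hx.1).hasDerivWithinAt) hinit.le
      (fun x hx hvx => Phi_le_Phi_s12 hvx hlo (hw x hx.1).1 (hw x hx.1).2) ⟨ht, le_rfl⟩
  have hpos : ∀ t, 0 ≤ t →
      s0 + (∫ τ in (0:ℝ)..t, v' τ) ≤ s0 + ∫ τ in (0:ℝ)..t, v τ := fun t ht =>
    (add_le_add_iff_left s0).2 (intervalIntegral.integral_mono_on ht
      ((hcont' t).intervalIntegrable_of_Icc ht) ((hcont t).intervalIntegrable_of_Icc ht)
      fun x hx => hvel x hx.1)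
  exact ⟨hpos, fun B hB t ht => (hpos t ht).trans_lt (hB t ht)⟩

/-- **Ego Braking Limit Update** (paper's Theorem 3 in the
position-independent model): strengthening the ego braking limit from
`a_lo` to `a_lo' ≤ a_lo` while keeping the same input `a` and disturbance
`w` can only decrease the position; hence if the ego stays behind a barrier
`B` with limit `a_lo`, it also does with the stronger limit `a_lo'`. -/
theorem ego_braking_limit_update
    (vmax ahi alo alo' s0 : ℝ) (hvmax : 0 < vmax)
    (hlo : alo' ≤ alo) (hhi : alo ≤ ahi)
    (a w : ℝ → ℝ)
    (hw : ∀ t, 0 ≤ t → alo' + w t ≤ 0 ∧ 0 ≤ ahi + w t)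
    (v v' : ℝ → ℝ)
    (hv : ∀ t, 0 ≤ t → HasDerivAt v (Phi vmax alo ahi (v t) (a t) (w t)) t)
    (hv' : ∀ t, 0 ≤ t → HasDerivAt v' (Phi vmax alo' ahi (v' t) (a t) (w t)) t)
    (hinit : v' 0 = v 0) :
    (∀ t, 0 ≤ t →
      s0 + (∫ τ in (0:ℝ)..t, v' τ) ≤ s0 + ∫ τ in (0:ℝ)..t, v τ) ∧
    (∀ B : ℝ → ℝ,
      (∀ t, 0 ≤ t → s0 + (∫ τ in (0:ℝ)..t, v τ) < B t) →
      ∀ t, 0 ≤ t → s0 + (∫ τ in (0:ℝ)..t, v' τ) < B t) :=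
  ego_braking_limit_update_general vmax ahi alo alo' s0 hlo a w hw v v' hv hv' hinit
end

section
/- Fix v_max > 0, an engine limit a_hi, braking limits a_lo ≤ a_lo' ≤ a_hi, and a disturbance w : [0,∞) → ℝ with a_lo + w(t) ≤ 0 ≤ a_hi + w(t) for all t. Let v, v' : [0,∞) → ℝ be differentiable full-braking solutions: v̇(t) = Φ(v(t), a_lo, w(t); a_lo, a_hi) and v̇'(t) = Φ(v'(t), a_lo', w(t); a_lo', a_hi), with v(0) = v'(0), and positions s(t) = s0 + ∫₀ᵗ v, s'(t) = s0 + ∫₀ᵗ v'. Then s(t) ≤ s'(t) for all t ≥ 0; in particular, if an ego trajectory e : [0,∞) → ℝ satisfies e(t) < s(t) for all t, then also e(t) < s'(t) for all t. -/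
/-! Full braking with limit `a_lo` accelerates by `a_lo + w ≤ 0`, except that a vehicle held at
rest (or at `v_max`) has acceleration `0`. Hence whenever the vehicle braking with `a_lo' ≥ a_lo`
is the slower one, its acceleration is at least the other's. A comparison principle that needs
the derivative inequality only where the order fails then gives `v ≤ v'` from `v 0 = v' 0`, and
integrating gives the positions. -/

open Set

-- Strict fencing against `g + δ (t - a + 1)` for every `δ > 0`.
theorem le_of_hasDerivAt_le_of_lt {f g f' g' : ℝ → ℝ} {a : ℝ}
    (hf : ∀ t, a ≤ t → HasDerivAt f (f' t) t) (hg : ∀ t, a ≤ t → HasDerivAt g (g' t) t)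
    (ha : f a ≤ g a) (hderiv : ∀ t, a ≤ t → g t < f t → f' t ≤ g' t) :
    ∀ t, a ≤ t → f t ≤ g t := by
  intro b hab
  refine le_of_forall_pos_le_add fun ε hε => ?_
  set δ := ε / (b - a + 1)
  have hδ : 0 < δ := div_pos hε (by linarith)
  have fence := image_le_of_deriv_right_lt_deriv_boundary' (a := a) (b := b)
    (B := fun x => g x + δ * (x - a + 1)) (B' := fun x => g' x + δ)
    (fun x hx => (hf x hx.1).continuousAt.continuousWithinAt)
    (fun x hx => (hf x hx.1).hasDerivWithinAt)
    (by simp only [sub_self, zero_add, mul_one]; linarith)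
    (fun x hx => ((hg x hx.1).continuousAt.add (by fun_prop)).continuousWithinAt)
    (fun x hx => by
      simpa using ((hg x hx.1).fun_add (((hasDerivAt_id x).sub_const a).add_const 1
        |>.const_mul δ)).hasDerivWithinAt)
    (fun x hx hfx => by
      have hgf : g x < f x := by rw [hfx]; nlinarith [hx.1]
      linarith [hderiv x hx.1 hgf])
    (right_mem_Icc.2 hab)
  calc f b ≤ g b + δ * (b - a + 1) := fence
    _ = g b + ε := by rw [div_mul_cancel₀ _ (by linarith)]

theorem Phi_fullBraking_le {vmax alo alo' ahi x y w : ℝ}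
    (hlo : alo ≤ alo') (hhi : alo' ≤ ahi) (hw : alo + w ≤ 0) (hyx : y ≤ x) :
    Phi vmax alo ahi x alo w ≤ Phi vmax alo' ahi y alo' w := by
  unfold Phi
  rw [min_eq_right (hlo.trans hhi), min_eq_right hhi, max_self, max_self]
  split_ifs with hx hy hy
  · rfl
  · rcases hx with ⟨hx0, -⟩ | ⟨-, hw0⟩
    · exact le_of_not_gt fun hpos => hy (Or.inl ⟨hyx.trans hx0, hpos.le⟩)
    · linarith
  · linarith
  · linarith

theorem intervalIntegrable_of_hasDerivAt {v v' : ℝ → ℝ} {a b : ℝ}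
    (hv : ∀ t, a ≤ t → HasDerivAt v (v' t) t) (hab : a ≤ b) :
    IntervalIntegrable v MeasureTheory.volume a b :=
  ContinuousOn.intervalIntegrable fun x hx =>
    (hv x (by rw [uIcc_of_le hab] at hx; exact hx.1)).continuousAt.continuousWithinAt

theorem leader_braking_limit_update_general
    (vmax ahi alo alo' s0 : ℝ)
    (hlo : alo ≤ alo') (hhi : alo' ≤ ahi)
    (w : ℝ → ℝ)
    (hw : ∀ t, 0 ≤ t → alo + w t ≤ 0 ∧ 0 ≤ ahi + w t)
    (v v' : ℝ → ℝ)
    (hv : ∀ t, 0 ≤ t → HasDerivAt v (Phi vmax alo ahi (v t) alo (w t)) t)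
    (hv' : ∀ t, 0 ≤ t → HasDerivAt v' (Phi vmax alo' ahi (v' t) alo' (w t)) t)
    (hinit : v 0 = v' 0) :
    (∀ t, 0 ≤ t →
      s0 + (∫ τ in (0:ℝ)..t, v τ) ≤ s0 + ∫ τ in (0:ℝ)..t, v' τ) ∧
    (∀ e : ℝ → ℝ,
      (∀ t, 0 ≤ t → e t < s0 + ∫ τ in (0:ℝ)..t, v τ) →
      ∀ t, 0 ≤ t → e t < s0 + ∫ τ in (0:ℝ)..t, v' τ) := by
  have hvel : ∀ t, 0 ≤ t → v t ≤ v' t :=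
    le_of_hasDerivAt_le_of_lt hv hv' hinit.le fun t ht hlt =>
      Phi_fullBraking_le hlo hhi (hw t ht).1 hlt.le
  have hpos : ∀ t, 0 ≤ t →
      s0 + (∫ τ in (0:ℝ)..t, v τ) ≤ s0 + ∫ τ in (0:ℝ)..t, v' τ := fun t ht =>
    add_le_add_right (intervalIntegral.integral_mono_on ht
      (intervalIntegrable_of_hasDerivAt hv ht) (intervalIntegrable_of_hasDerivAt hv' ht)
      fun x hx => hvel x hx.1) s0
  exact ⟨hpos, fun e he t ht => (he t ht).trans_le (hpos t ht)⟩

/-- **Leader Braking Limit Update** (paper's Theorem 4 in the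
position-independent model): the full-braking trajectory's position is
monotone non-decreasing in the braking limit.  Hence if an ego trajectory
`e` stays behind the leader's full-braking position computed with braking
limit `a_lo`, it also stays behind the leader's full-braking position for
any weaker braking limit `a_lo' ≥ a_lo`. -/
theorem leader_braking_limit_update
    (vmax ahi alo alo' s0 : ℝ) (hvmax : 0 < vmax)
    (hlo : alo ≤ alo') (hhi : alo' ≤ ahi)
    (w : ℝ → ℝ)
    (hw : ∀ t, 0 ≤ t → alo + w t ≤ 0 ∧ 0 ≤ ahi + w t)
    (v v' : ℝ → ℝ)
    (hv : ∀ t, 0 ≤ t → HasDerivAt v (Phi vmax alo ahi (v t) alo (w t)) t)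
    (hv' : ∀ t, 0 ≤ t → HasDerivAt v' (Phi vmax alo' ahi (v' t) alo' (w t)) t)
    (hinit : v 0 = v' 0) :
    (∀ t, 0 ≤ t →
      s0 + (∫ τ in (0:ℝ)..t, v τ) ≤ s0 + ∫ τ in (0:ℝ)..t, v' τ) ∧
    (∀ e : ℝ → ℝ,
      (∀ t, 0 ≤ t → e t < s0 + ∫ τ in (0:ℝ)..t, v τ) →
      ∀ t, 0 ≤ t → e t < s0 + ∫ τ in (0:ℝ)..t, v' τ) :=
  leader_braking_limit_update_general vmax ahi alo alo' s0 hlo hhi w hw v v' hv hv' hinit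
end
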